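/- arXiv:2209.06770 — 4 statements merged into one kernel-verified Lean document; each statement's English description precedes it below -/
import Mathlib

section
/- For any positive integer k, any complex number α not in the set of nonpositive integers, and any real x with |x| < 1, the following power series identity holds: ((-1)^k / k!) · log^k(1-x) / (1-x)^α = Σ_{n≥1} C(n+α-1, n) · ζ_n({1}_k; α) · x^n, where C(n+α-1,n) = Γ(n+α)/(Γ(n+1)Γ(α)) = (α)_n / n! and ζ_n({1}_k; α) = Σ_{n ≥ n_1 > ... > n_k ≥ 1} 1/((n_1+α-1)(n_2+α-1)⋯(n_k+α-1)). -/
/-!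
Let `aₖ(n) = (α)ₙ / n! · ζₙ({1}ₖ; α)` and `fₖ(z) = ∑ₙ aₖ(n) zⁿ`. Splitting off the largest index
in `ζₙ₊₁({1}ₖ₊₁; α)` gives `(n + 1) aₖ(n + 1) = (α + n) aₖ(n) + aₖ₋₁(n)` (with `a₋₁ = 0`), that is
`(1 - z) fₖ' = α fₖ + fₖ₋₁`, or equivalently `((1 - z)^α fₖ)' = (1 - z)^(α - 1) fₖ₋₁`.
The functions `Tₖ(z) = (-log (1 - z))ᵏ / k!` satisfy `Tₖ' = Tₖ₋₁ / (1 - z)`, and `(1 - z)^α fₖ` and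
`Tₖ` agree at `z = 0`, so induction on `k` gives `(1 - z)^α fₖ = Tₖ` on the unit disc.
The same recurrence bounds `‖aₖ(n)‖` by a binomial coefficient `C(n + m + k + 1, m + k + 1)` for an
integer `m ≥ ‖α‖`, which makes all these series converge on the unit disc.
-/

/-- Pochhammer symbol `(α)_n = α(α+1)⋯(α+n-1)`. -/
noncomputable def poch (α : ℂ) (n : ℕ) : ℂ := ∏ i ∈ Finset.range n, (α + i)

/-- Hurwitz-type multiple harmonic sum `ζ_n({1}_k; a) = Σ_{n ≥ n_1 > ⋯ > n_k ≥ 1} Π 1/(n_j+a-1)`. -/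
noncomputable def hmhs (a : ℂ) : ℕ → ℕ → ℂ
  | _, 0 => 1
  | n, k + 1 => ∑ j ∈ Finset.Icc 1 n, (1 / ((j : ℂ) + a - 1)) * hmhs a (j - 1) k
  termination_by n k => k

/-- Hurwitz-type multiple harmonic star sum `ζ_n^⋆({1}_k; a) = Σ_{n ≥ n_1 ≥ ⋯ ≥ n_k ≥ 1} Π 1/(n_j+a-1)`. -/
noncomputable def hmhsStar (a : ℂ) : ℕ → ℕ → ℂ
  | _, 0 => 1
  | n, k + 1 => ∑ j ∈ Finset.Icc 1 n, (1 / ((j : ℂ) + a - 1)) * hmhsStar a j k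
  termination_by n k => k

open Complex Metric Set
open scoped Nat

lemma poch_zero (α : ℂ) : poch α 0 = 1 := Finset.prod_range_zero _

lemma poch_succ (α : ℂ) (n : ℕ) : poch α (n + 1) = poch α n * (α + n) :=
  Finset.prod_range_succ _ _

lemma hmhs_zero (a : ℂ) (n : ℕ) : hmhs a n 0 = 1 := by rw [hmhs]

lemma hmhs_zero_succ (a : ℂ) (k : ℕ) : hmhs a 0 (k + 1) = 0 := by rw [hmhs]; simp

lemma hmhs_succ_succ (a : ℂ) (n k : ℕ) :
    hmhs a (n + 1) (k + 1) = hmhs a n (k + 1) + 1 / ((n + 1 : ℕ) + a - 1) * hmhs a n k := by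
  rw [hmhs, hmhs, Finset.sum_Icc_succ_top (by omega)]
  simp

lemma one_sub_mem_slitPlane {z : ℂ} (hz : ‖z‖ < 1) : 1 - z ∈ slitPlane := by
  simpa [sub_eq_add_neg] using mem_slitPlane_of_norm_lt_one (by rwa [norm_neg] : ‖-z‖ < 1)

lemma eqOn_of_hasDerivAt {𝕜 G : Type*} [RCLike 𝕜] [NormedAddCommGroup G] [NormedSpace 𝕜 G]
    {s : Set 𝕜} {f g f' : 𝕜 → G} (hs : IsOpen s) (hs' : IsPreconnected s)
    (hf : ∀ z ∈ s, HasDerivAt f (f' z) z) (hg : ∀ z ∈ s, HasDerivAt g (f' z) z) {z₀ : 𝕜}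
    (hz₀ : z₀ ∈ s) (h : f z₀ = g z₀) : EqOn f g s :=
  hs.eqOn_of_deriv_eq hs' (fun z hz ↦ (hf z hz).differentiableAt.differentiableWithinAt)
    (fun z hz ↦ (hg z hz).differentiableAt.differentiableWithinAt)
    (fun z hz ↦ (hf z hz).deriv.trans (hg z hz).deriv.symm) hz₀ h

section PowerSeries

variable {c : ℕ → ℂ}

lemma tsum_mul_zero_pow : ∑' n, c n * 0 ^ n = c 0 := by
  rw [tsum_eq_single 0 fun n hn ↦ by simp [zero_pow hn]]
  simp

lemma summable_norm_mul_pow_of_norm_le_choose {j : ℕ} (hc : ∀ n, ‖c n‖ ≤ (n + j).choose j)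
    {z : ℂ} (hz : ‖z‖ < 1) : Summable fun n ↦ ‖c n * z ^ n‖ := by
  refine .of_nonneg_of_le (fun n ↦ norm_nonneg _) (fun n ↦ ?_)
    (summable_choose_mul_geometric_of_norm_lt_one j (r := ‖z‖) (by simpa using hz))
  rw [norm_mul, norm_pow]
  gcongr
  exact hc n

lemma hasSum_deriv_tsum_mul_pow (hc : ∀ z : ℂ, ‖z‖ < 1 → Summable fun n ↦ ‖c n * z ^ n‖)
    {z : ℂ} (hz : ‖z‖ < 1) :
    DifferentiableAt ℂ (fun w ↦ ∑' n, c n * w ^ n) z ∧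
      HasSum (fun n ↦ c n * (n * z ^ (n - 1))) (deriv (fun w ↦ ∑' n, c n * w ^ n) z) := by
  obtain ⟨r, hzr, hr⟩ := exists_between hz
  have hnorm_r : ‖(r : ℂ)‖ = r := by simp [abs_of_nonneg ((norm_nonneg z).trans hzr.le)]
  have hbound : ∀ n, ∀ w ∈ ball (0 : ℂ) r, ‖c n * w ^ n‖ ≤ ‖c n * (r : ℂ) ^ n‖ := by
    intro n w hw
    rw [norm_mul, norm_mul, norm_pow, norm_pow, hnorm_r]
    gcongr
    exact (mem_ball_zero_iff.mp hw).le
  have hsum := hc r (hnorm_r.trans_lt hr)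
  have hdiff : ∀ n, DifferentiableOn ℂ (fun w ↦ c n * w ^ n) (ball 0 r) := fun n ↦ by fun_prop
  have hzr' : z ∈ ball (0 : ℂ) r := mem_ball_zero_iff.mpr hzr
  refine ⟨(differentiableOn_tsum_of_summable_norm hsum hdiff isOpen_ball hbound).differentiableAt
    (isOpen_ball.mem_nhds hzr'), ?_⟩
  simpa only [deriv_const_mul_field', deriv_pow_field] using
    hasSum_deriv_of_summable_norm hsum hdiff isOpen_ball hbound hzr'

/-- With `f = ∑ cₙ zⁿ`: `((1 - z)^α f)' = (1 - z)^(α - 1) ((1 - z) f' - α f)`, and the recurrence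
turns `(1 - z) f' - α f` into `∑ wₙ zⁿ`. -/
lemma hasDerivAt_one_sub_cpow_mul_tsum {α : ℂ} {w : ℕ → ℂ}
    (hc : ∀ z : ℂ, ‖z‖ < 1 → Summable fun n ↦ ‖c n * z ^ n‖)
    (hrec : ∀ n : ℕ, ((n : ℂ) + 1) * c (n + 1) = (α + n) * c n + w n) {z : ℂ} (hz : ‖z‖ < 1) :
    HasDerivAt (fun z ↦ (1 - z) ^ α * ∑' n, c n * z ^ n)
      ((1 - z) ^ (α - 1) * ∑' n, w n * z ^ n) z := by
  obtain ⟨hdiff, hD⟩ := hasSum_deriv_tsum_mul_pow hc hz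
  set F := fun w ↦ ∑' n, c n * w ^ n
  set D := deriv F z
  have hF : HasSum (fun n ↦ c n * z ^ n) (F z) := (hc z hz).of_norm.hasSum
  have hzD : HasSum (fun n ↦ n * c n * z ^ n) (z * D) := by
    have hterm : ∀ n : ℕ, z * (c n * (n * z ^ (n - 1))) = n * c n * z ^ n := by
      rintro (_ | n)
      · simp
      · simp only [Nat.add_sub_cancel, pow_succ]; ring
    simpa only [hterm] using hD.mul_left z
  have hD' : HasSum (fun n : ℕ ↦ c (n + 1) * ((n + 1) * z ^ n)) D := by
    rw [← hasSum_nat_add_iff' 1] at hD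
    simpa using hD
  have hW : HasSum (fun n ↦ w n * z ^ n) (D - (α * F z + z * D)) := by
    have hterm : ∀ n : ℕ, c (n + 1) * ((n + 1) * z ^ n) - (α * (c n * z ^ n) + n * c n * z ^ n)
        = w n * z ^ n := fun n ↦ by linear_combination z ^ n * hrec n
    simpa only [hterm] using hD'.sub ((hF.mul_left α).add hzD)
  have h1z := one_sub_mem_slitPlane hz
  have hpow : (1 - z) ^ α = (1 - z) ^ (α - 1) * (1 - z) := by
    rw [cpow_sub _ _ (slitPlane_ne_zero h1z), cpow_one, div_mul_cancel₀ _ (slitPlane_ne_zero h1z)]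
  refine ((((hasDerivAt_id z).const_sub 1).cpow_const h1z).mul hdiff.hasDerivAt).congr_deriv ?_
  rw [hW.tsum_eq, id, hpow]
  ring

end PowerSeries

lemma norm_le_choose_of_recurrence {α : ℂ} {c w : ℕ → ℂ} {j : ℕ} (hα : ‖α‖ ≤ j)
    (hrec : ∀ n : ℕ, ((n : ℂ) + 1) * c (n + 1) = (α + n) * c n + w n) (hc0 : ‖c 0‖ ≤ 1)
    (hw : ∀ n, ‖w n‖ ≤ (n + j).choose j) (n : ℕ) : ‖c n‖ ≤ (n + (j + 1)).choose (j + 1) := by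
  induction n with
  | zero => simpa using hc0
  | succ n ih =>
    have hpascal : (n + j).choose j ≤ (n + (j + 1)).choose (j + 1) := by
      rw [← add_assoc, Nat.choose_succ_succ']
      exact Nat.le_add_right _ _
    -- `Bₙ = C(n + j + 1, j + 1)` satisfies `(n + 1) Bₙ₊₁ = (n + j + 2) Bₙ`, a majorant recurrence.
    have hstep : ((n + 1 + (j + 1)).choose (j + 1) : ℝ) * (n + 1) =
        (n + (j + 1)).choose (j + 1) * (n + j + 2) := by
      have := Nat.choose_mul_succ_eq (n + j + 1) (j + 1)
      norm_cast
      grind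
    have hwB : ‖w n‖ ≤ (n + (j + 1)).choose (j + 1) := (hw n).trans (by exact_mod_cast hpascal)
    set B : ℝ := ↑((n + (j + 1)).choose (j + 1))
    have hB : 0 ≤ B := by positivity
    have key : ((n : ℝ) + 1) * ‖c (n + 1)‖ ≤ ((n : ℝ) + 1) * (n + 1 + (j + 1)).choose (j + 1) :=
      calc ((n : ℝ) + 1) * ‖c (n + 1)‖ = ‖(α + n) * c n + w n‖ := by
            rw [← hrec, norm_mul]; norm_cast
        _ ≤ (‖α‖ + n) * ‖c n‖ + ‖w n‖ := by
            refine (norm_add_le _ _).trans (add_le_add_left ?_ _)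
            rw [norm_mul]
            gcongr
            exact (norm_add_le _ _).trans_eq (by simp)
        _ ≤ (j + n) * B + B := by gcongr
        _ ≤ ((n : ℝ) + 1) * (n + 1 + (j + 1)).choose (j + 1) := by linarith
    exact le_of_mul_le_mul_left key (by positivity)

/-- The coefficient of `zⁿ` in `(-log (1 - z))ᵏ / k! · (1 - z)^(-α)`. -/
noncomputable def logPowCoeff (α : ℂ) (k n : ℕ) : ℂ := poch α n / n ! * hmhs α n k

section Coefficients

variable {α : ℂ}

lemma logPowCoeff_zero_zero : logPowCoeff α 0 0 = 1 := by
  simp [logPowCoeff, poch_zero, hmhs_zero]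

lemma logPowCoeff_succ_zero (k : ℕ) : logPowCoeff α (k + 1) 0 = 0 := by
  simp [logPowCoeff, hmhs_zero_succ]

lemma logPowCoeff_zero_recurrence (n : ℕ) :
    ((n : ℂ) + 1) * logPowCoeff α 0 (n + 1) = (α + n) * logPowCoeff α 0 n + 0 := by
  simp only [logPowCoeff, hmhs_zero, poch_succ, Nat.factorial_succ, Nat.cast_mul, Nat.cast_succ,
    add_zero]
  field_simp

lemma logPowCoeff_succ_recurrence (hα : ∀ m : ℕ, α ≠ -(m : ℂ)) (k n : ℕ) :
    ((n : ℂ) + 1) * logPowCoeff α (k + 1) (n + 1) =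
      (α + n) * logPowCoeff α (k + 1) n + logPowCoeff α k n := by
  have hαn : α + n ≠ 0 := fun h ↦ hα n (eq_neg_of_add_eq_zero_left h)
  simp only [logPowCoeff, hmhs_succ_succ, poch_succ, Nat.factorial_succ, Nat.cast_mul,
    Nat.cast_succ]
  rw [show (n : ℂ) + 1 + α - 1 = α + n by ring]
  field_simp

lemma norm_logPowCoeff_le (hα : ∀ m : ℕ, α ≠ -(m : ℂ)) {m : ℕ} (hm : ‖α‖ ≤ m) (k n : ℕ) :
    ‖logPowCoeff α k n‖ ≤ (n + (m + k + 1)).choose (m + k + 1) := by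
  induction k generalizing n with
  | zero =>
    exact norm_le_choose_of_recurrence hm logPowCoeff_zero_recurrence
      (by simp [logPowCoeff_zero_zero]) (fun n ↦ by simp) n
  | succ k ih =>
    exact norm_le_choose_of_recurrence (hm.trans (by norm_cast; omega))
      (logPowCoeff_succ_recurrence hα k) (by simp [logPowCoeff_succ_zero]) ih n

lemma summable_norm_logPowCoeff_mul_pow (hα : ∀ m : ℕ, α ≠ -(m : ℂ)) (k : ℕ) {z : ℂ}
    (hz : ‖z‖ < 1) : Summable fun n ↦ ‖logPowCoeff α k n * z ^ n‖ :=
  summable_norm_mul_pow_of_norm_le_choose (norm_logPowCoeff_le hα (Nat.le_ceil ‖α‖) k) hz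

end Coefficients

lemma hasDerivAt_neg_log_one_sub_pow_div_factorial (k : ℕ) {z : ℂ} (hz : ‖z‖ < 1) :
    HasDerivAt (fun z ↦ (-log (1 - z)) ^ (k + 1) / (k + 1)!)
      ((-log (1 - z)) ^ k / k ! / (1 - z)) z := by
  have h1z := one_sub_mem_slitPlane hz
  have hlog : HasDerivAt (fun z ↦ -log (1 - z)) (1 - z)⁻¹ z := by
    simpa [Function.comp_def] using
      ((hasDerivAt_log h1z).comp z ((hasDerivAt_id z).const_sub 1)).fun_neg
  refine ((hlog.pow (k + 1)).div_const _).congr_deriv ?_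
  rw [Nat.factorial_succ, Nat.cast_mul]
  field_simp [slitPlane_ne_zero h1z]
  push_cast
  ring

theorem eqOn_one_sub_cpow_mul_tsum_logPowCoeff {α : ℂ} (hα : ∀ m : ℕ, α ≠ -(m : ℂ)) (k : ℕ) :
    EqOn (fun z ↦ (1 - z) ^ α * ∑' n, logPowCoeff α k n * z ^ n)
      (fun z ↦ (-log (1 - z)) ^ k / k !) (ball 0 1) := by
  have hc (k : ℕ) (z : ℂ) := summable_norm_logPowCoeff_mul_pow hα k (z := z)
  induction k with
  | zero =>
    refine eqOn_of_hasDerivAt isOpen_ball (convex_ball 0 1).isPreconnected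
      (fun z hz ↦ hasDerivAt_one_sub_cpow_mul_tsum (hc 0) logPowCoeff_zero_recurrence
        (mem_ball_zero_iff.mp hz)) (fun z _ ↦ ?_) (mem_ball_self one_pos) ?_
    · simpa using hasDerivAt_const z (1 : ℂ)
    · simp [tsum_mul_zero_pow, logPowCoeff_zero_zero]
  | succ k ih =>
    refine eqOn_of_hasDerivAt isOpen_ball (convex_ball 0 1).isPreconnected
      (fun z hz ↦ hasDerivAt_one_sub_cpow_mul_tsum (hc (k + 1))
        (logPowCoeff_succ_recurrence hα k) (mem_ball_zero_iff.mp hz))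
      (fun z hz ↦ ?_) (mem_ball_self one_pos) ?_
    · have hz' := mem_ball_zero_iff.mp hz
      have hk : (1 - z) ^ α * ∑' n, logPowCoeff α k n * z ^ n = (-log (1 - z)) ^ k / k ! := ih hz
      refine (hasDerivAt_neg_log_one_sub_pow_div_factorial k hz').congr_deriv ?_
      rw [← hk, cpow_sub _ _ (slitPlane_ne_zero (one_sub_mem_slitPlane hz')), cpow_one]
      ring
    · simp [tsum_mul_zero_pow, logPowCoeff_succ_zero]

theorem log_pow_div_pow_series (k : ℕ) (hk : 1 ≤ k) (α : ℂ)
    (hα : ∀ m : ℕ, α ≠ -(m : ℂ)) (x : ℝ) (hx : |x| < 1) :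
    ((-1 : ℂ) ^ k / (k.factorial : ℂ)) * (Complex.log (1 - (x : ℂ))) ^ k / ((1 - (x : ℂ)) ^ α) =
      ∑' n : ℕ, (poch α (n + 1) / ((n + 1).factorial : ℂ)) * hmhs α (n + 1) k * (x : ℂ) ^ (n + 1) := by
  obtain ⟨k, rfl⟩ := Nat.exists_eq_add_of_le' hk
  have hx' : ‖(x : ℂ)‖ < 1 := by rwa [norm_real, Real.norm_eq_abs]
  have hpow : (1 - (x : ℂ)) ^ α ≠ 0 :=
    cpow_ne_zero_iff.mpr (.inl (slitPlane_ne_zero (one_sub_mem_slitPlane hx')))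
  have key : (1 - (x : ℂ)) ^ α * ∑' n, logPowCoeff α (k + 1) n * (x : ℂ) ^ n =
      (-log (1 - (x : ℂ))) ^ (k + 1) / (k + 1)! :=
    eqOn_one_sub_cpow_mul_tsum_logPowCoeff hα (k + 1) (mem_ball_zero_iff.mpr hx')
  rw [(summable_norm_logPowCoeff_mul_pow hα (k + 1) hx').of_norm.tsum_eq_zero_add,
    logPowCoeff_succ_zero, zero_mul, zero_add] at key
  rw [div_eq_iff hpow, mul_comm _ ((1 - (x : ℂ)) ^ α)]
  simp only [logPowCoeff] at key
  rw [key, neg_pow]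
  ring
end

section
/- For nonnegative integers k and positive integer n and complex α with Re(α) < 1, the k-th derivative of the reciprocal binomial coefficient satisfies (d^k/dα^k) [1/C(n-α, n)] = k! · ζ_n^⋆({1}_k; 1-α) / C(n-α, n), where C(n-α,n) = Γ(n-α+1)/(Γ(n+1)Γ(1-α)) and ζ_n^⋆({1}_k; 1-α) = Σ_{n ≥ n_1 ≥ ... ≥ n_k ≥ 1} Π_j 1/(n_j - α). -/
/-- Generalized binomial coefficient `C(a,b) = Γ(a+1)/(Γ(b+1)Γ(a-b+1))`. -/
noncomputable def cbinom (a b : ℂ) : ℂ :=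
  Complex.Gamma (a + 1) / (Complex.Gamma (b + 1) * Complex.Gamma (a - b + 1))

/-- Power sum `Σ_{j=1}^n 1/(j+a-1)^s`. -/
noncomputable def psum (a : ℂ) (n s : ℕ) : ℂ := ∑ j ∈ Finset.Icc 1 n, (1 / ((j : ℂ) + a - 1)) ^ s


open Finset Filter Topology Nat

section StarSumAlgebra

variable (α : ℂ)

lemma hmhsStar_one_sub_zero (n : ℕ) : hmhsStar (1 - α) n 0 = 1 := by
  rw [hmhsStar]

lemma hmhsStar_one_sub_succ (n k : ℕ) :
    hmhsStar (1 - α) n (k + 1) = ∑ j ∈ Icc 1 n, ((j : ℂ) - α)⁻¹ * hmhsStar (1 - α) j k := by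
  rw [hmhsStar]
  refine sum_congr rfl fun j _ => ?_
  rw [one_div]
  ring_nf

lemma hmhsStar_one_sub_one (n : ℕ) :
    hmhsStar (1 - α) n 1 = ∑ j ∈ Icc 1 n, ((j : ℂ) - α)⁻¹ := by
  simp only [hmhsStar_one_sub_succ, hmhsStar_one_sub_zero, mul_one]

lemma sum_Icc_inv_sub_eq_hmhsStar_one_sub {j n : ℕ} (hj : 1 ≤ j) (hjn : j ≤ n) :
    ∑ i ∈ Icc j n, ((i : ℂ) - α)⁻¹ =
      hmhsStar (1 - α) n 1 - hmhsStar (1 - α) j 1 + ((j : ℂ) - α)⁻¹ := by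
  have hsplit := sum_Ico_consecutive (fun i : ℕ => ((i : ℂ) - α)⁻¹) hj (by omega : j ≤ n + 1)
  simp only [hmhsStar_one_sub_one, ← Ico_add_one_right_eq_Icc, sum_Ico_succ_top hj] at hsplit ⊢
  rw [← hsplit]
  ring

lemma hmhsStar_one_sub_add_two (n k : ℕ) :
    hmhsStar (1 - α) n (k + 2) = ∑ j ∈ Icc 1 n,
      ((j : ℂ) - α)⁻¹ * hmhsStar (1 - α) j k * ∑ i ∈ Icc j n, ((i : ℂ) - α)⁻¹ := by
  simp only [hmhsStar_one_sub_succ, mul_sum]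
  exact sum_comm' (fun i j => by simp only [mem_Icc]; omega) |>.trans <|
    sum_congr rfl fun _ _ => sum_congr rfl fun _ _ => by ring

end StarSumAlgebra

section Derivatives

lemma hasDerivAt_inv_sub {c α : ℂ} (h : c - α ≠ 0) :
    HasDerivAt (fun a => (c - a)⁻¹) ((c - α)⁻¹ ^ 2) α := by
  simpa [inv_pow] using ((hasDerivAt_id' α).const_sub c).fun_inv h

variable {n : ℕ} {α : ℂ}

lemma hasDerivAt_hmhsStar_one_sub (hα : ∀ j ∈ Icc 1 n, (j : ℂ) - α ≠ 0) (k : ℕ) :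
    HasDerivAt (fun a => hmhsStar (1 - a) n k)
      ((k + 1) * hmhsStar (1 - α) n (k + 1) - hmhsStar (1 - α) n 1 * hmhsStar (1 - α) n k) α := by
  induction k generalizing n with
  | zero =>
    simp only [hmhsStar_one_sub_zero]
    exact (hasDerivAt_const α 1).congr_deriv (by simp)
  | succ k ih =>
    have hfun : (fun a => hmhsStar (1 - a) n (k + 1)) =
        fun a => ∑ j ∈ Icc 1 n, ((j : ℂ) - a)⁻¹ * hmhsStar (1 - a) j k :=
      funext fun a => hmhsStar_one_sub_succ a n k
    rw [hfun]
    have hterm : ∀ j ∈ Icc 1 n, HasDerivAt (fun a => ((j : ℂ) - a)⁻¹ * hmhsStar (1 - a) j k)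
        (((j : ℂ) - α)⁻¹ ^ 2 * hmhsStar (1 - α) j k + ((j : ℂ) - α)⁻¹ *
          ((k + 1) * hmhsStar (1 - α) j (k + 1) - hmhsStar (1 - α) j 1 * hmhsStar (1 - α) j k))
        α := fun j hj =>
      (hasDerivAt_inv_sub (hα j hj)).mul <| ih fun i hi => hα i <| by
        simp only [mem_Icc] at hi hj ⊢; omega
    have hS : hmhsStar (1 - α) n (k + 2) = ∑ j ∈ Icc 1 n, ((j : ℂ) - α)⁻¹ * hmhsStar (1 - α) j k *
        (hmhsStar (1 - α) n 1 - hmhsStar (1 - α) j 1 + ((j : ℂ) - α)⁻¹) :=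
      (hmhsStar_one_sub_add_two α n k).trans <| sum_congr rfl fun j hj => by
        rw [sum_Icc_inv_sub_eq_hmhsStar_one_sub α (mem_Icc.1 hj).1 (mem_Icc.1 hj).2]
    refine (HasDerivAt.fun_sum hterm).congr_deriv ?_
    calc _ = ∑ j ∈ Icc 1 n, ((k + 1) * (((j : ℂ) - α)⁻¹ * hmhsStar (1 - α) j (k + 1)) +
          ((j : ℂ) - α)⁻¹ * hmhsStar (1 - α) j k *
            (hmhsStar (1 - α) n 1 - hmhsStar (1 - α) j 1 + ((j : ℂ) - α)⁻¹) -
          hmhsStar (1 - α) n 1 * (((j : ℂ) - α)⁻¹ * hmhsStar (1 - α) j k)) :=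
          sum_congr rfl fun j _ => by ring
      _ = (k + 1) * hmhsStar (1 - α) n (k + 2) + hmhsStar (1 - α) n (k + 2) -
          hmhsStar (1 - α) n 1 * hmhsStar (1 - α) n (k + 1) := by
        rw [sum_sub_distrib, sum_add_distrib, ← mul_sum, ← mul_sum, ← hmhsStar_one_sub_succ,
          ← hmhsStar_one_sub_succ, ← hS]
      _ = _ := by
        push_cast
        ring

lemma hasDerivAt_prod_inv_sub (hα : ∀ j ∈ Icc 1 n, (j : ℂ) - α ≠ 0) :
    HasDerivAt (fun a => ∏ j ∈ Icc 1 n, ((j : ℂ) - a)⁻¹)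
      (hmhsStar (1 - α) n 1 * ∏ j ∈ Icc 1 n, ((j : ℂ) - α)⁻¹) α := by
  refine (HasDerivAt.fun_finsetProd fun j hj => hasDerivAt_inv_sub (hα j hj)).congr_deriv ?_
  rw [hmhsStar_one_sub_one, sum_mul]
  refine sum_congr rfl fun j hj => ?_
  rw [smul_eq_mul, ← prod_erase_mul _ _ hj]
  ring

lemma hasDerivAt_factorial_mul_hmhsStar_mul_prod (hα : ∀ j ∈ Icc 1 n, (j : ℂ) - α ≠ 0) (k : ℕ) :
    HasDerivAt (fun a => (k ! : ℂ) * hmhsStar (1 - a) n k * ∏ j ∈ Icc 1 n, ((j : ℂ) - a)⁻¹)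
      ((k + 1)! * hmhsStar (1 - α) n (k + 1) * ∏ j ∈ Icc 1 n, ((j : ℂ) - α)⁻¹) α := by
  refine (((hasDerivAt_hmhsStar_one_sub hα k).const_mul _).mul
    (hasDerivAt_prod_inv_sub hα)).congr_deriv ?_
  rw [Nat.factorial_succ]
  push_cast
  ring

lemma iteratedDeriv_prod_inv_sub (hα : ∀ j ∈ Icc 1 n, (j : ℂ) - α ≠ 0) (k : ℕ) :
    iteratedDeriv k (fun a => ∏ j ∈ Icc 1 n, ((j : ℂ) - a)⁻¹) α =
      k ! * hmhsStar (1 - α) n k * ∏ j ∈ Icc 1 n, ((j : ℂ) - α)⁻¹ := by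
  induction k generalizing α with
  | zero => simp [hmhsStar_one_sub_zero]
  | succ k ih =>
    have hU : ∀ᶠ a in 𝓝 α, ∀ j ∈ Icc 1 n, (j : ℂ) - a ≠ 0 := (eventually_all_finset _).2
      fun j hj => (continuous_const.sub continuous_id).continuousAt.eventually_ne (hα j hj)
    rw [iteratedDeriv_succ, EventuallyEq.deriv_eq (hU.mono fun a ha => ih ha)]
    exact (hasDerivAt_factorial_mul_hmhsStar_mul_prod hα k).deriv

end Derivatives

lemma natCast_sub_ne_zero {a : ℂ} (ha : ∀ m : ℕ, 1 - a ≠ -m) {j : ℕ} (hj : 1 ≤ j) :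
    (j : ℂ) - a ≠ 0 := by
  obtain ⟨m, rfl⟩ := Nat.exists_eq_add_of_le' hj
  intro h
  apply ha m
  push_cast at h
  linear_combination h

lemma one_sub_ne_neg_natCast_of_re_lt_one {a : ℂ} (ha : a.re < 1) (m : ℕ) : 1 - a ≠ -m := by
  intro h
  have hre := congrArg Complex.re h
  simp only [Complex.sub_re, Complex.one_re, Complex.neg_re, Complex.natCast_re] at hre
  linarith [m.cast_nonneg (α := ℝ)]

lemma Gamma_natCast_sub_add_one {a : ℂ} {n : ℕ} (ha : ∀ j ∈ Icc 1 n, (j : ℂ) - a ≠ 0) :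
    Complex.Gamma (n - a + 1) = Complex.Gamma (1 - a) * ∏ j ∈ Icc 1 n, ((j : ℂ) - a) := by
  induction n with
  | zero => simp [sub_eq_neg_add]
  | succ n ih =>
    have hn : ((n + 1 : ℕ) : ℂ) - a ≠ 0 := ha _ (by simp)
    rw [Complex.Gamma_add_one _ hn, prod_Icc_succ_top (by omega), ← mul_assoc,
      ← ih fun j hj => ha j (by simp only [mem_Icc] at hj ⊢; omega), Nat.cast_succ, add_sub_right_comm]
    ring

lemma one_div_cbinom_natCast_sub (n : ℕ) {a : ℂ} (ha : ∀ m : ℕ, 1 - a ≠ -m) :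
    1 / cbinom ((n : ℂ) - a) n = n ! * ∏ j ∈ Icc 1 n, ((j : ℂ) - a)⁻¹ := by
  have hprod : ∀ j ∈ Icc 1 n, (j : ℂ) - a ≠ 0 :=
    fun j hj => natCast_sub_ne_zero ha (mem_Icc.1 hj).1
  rw [cbinom, Gamma_natCast_sub_add_one hprod, sub_sub_cancel_left, neg_add_eq_sub,
    Complex.Gamma_nat_eq_factorial, prod_inv_distrib]
  have := Complex.Gamma_ne_zero ha
  have := prod_ne_zero_iff.2 hprod
  field_simp

theorem iteratedDeriv_inv_binom_general (n k : ℕ) (α : ℂ) (hα : α.re < 1) :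
    iteratedDeriv k (fun a : ℂ => 1 / cbinom ((n : ℂ) - a) (n : ℂ)) α =
      (k.factorial : ℂ) * hmhsStar (1 - α) n k / cbinom ((n : ℂ) - α) (n : ℂ) := by
  have hU : ∀ᶠ a in 𝓝 α, a.re < 1 :=
    (Complex.continuous_re.continuousAt).eventually_lt continuousAt_const hα
  have hev : (fun a : ℂ => 1 / cbinom ((n : ℂ) - a) n) =ᶠ[𝓝 α]
      fun a => (n ! : ℂ) * ∏ j ∈ Icc 1 n, ((j : ℂ) - a)⁻¹ :=
    hU.mono fun a ha => one_div_cbinom_natCast_sub n (one_sub_ne_neg_natCast_of_re_lt_one ha)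
  have hα' := one_sub_ne_neg_natCast_of_re_lt_one hα
  rw [hev.iteratedDeriv_eq, iteratedDeriv_const_mul_field,
    iteratedDeriv_prod_inv_sub fun j hj => natCast_sub_ne_zero hα' (mem_Icc.1 hj).1,
    ← mul_one_div _ (cbinom _ _), one_div_cbinom_natCast_sub n hα']
  ring

theorem iteratedDeriv_inv_binom (n k : ℕ) (hn : 1 ≤ n) (α : ℂ) (hα : α.re < 1) :
    iteratedDeriv k (fun a : ℂ => 1 / cbinom ((n : ℂ) - a) (n : ℂ)) α =
      (k.factorial : ℂ) * hmhsStar (1 - α) n k / cbinom ((n : ℂ) - α) (n : ℂ) :=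
  iteratedDeriv_inv_binom_general n k α hα
end

section
/- For complex numbers α with Re(α) < 1 and β with Re(β) < 0, and the dilogarithm Li_2, integration by parts gives: ∫_0^1 Li_1(x)/(x^α (1-x)^β) dx = −(1-α) ∫_0^1 Li_2(x)/(x^α (1-x)^β) dx − β ∫_0^1 Li_2(x)/(x^{α-1} (1-x)^{β+1}) dx, where Li_1(x) = −log(1-x). -/
/-!
Put `F x = Li2 x * x ^ (1 - α) * (1 - x) ^ (-β)`. By the product rule and `x * Li2' x = Li₁ x`,
`F'` on `(0, 1)` is the first integrand plus `(1 - α)` times the second plus `β` times the third.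
As `Re (1 - α) > 0` and `Re (-β) > 0`, `F` is continuous on `[0, 1]` and vanishes at both ends,
and each integrand is a bounded continuous function times a convergent Beta integrand, so the
fundamental theorem of calculus gives `∫ F' = F 1 - F 0 = 0`.
-/

/-- Dilogarithm `Li₂(x) = Σ_{n≥1} x^n/n²` (as a complex number, for real `x`). -/
noncomputable def Li2 (x : ℝ) : ℂ := ∑' n : ℕ, (x : ℂ) ^ (n + 1) / ((n : ℂ) + 1) ^ 2

open MeasureTheory Set

lemma summable_inv_succ_sq : Summable fun n : ℕ => (((n : ℝ) + 1) ^ 2)⁻¹ := by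
  exact_mod_cast (summable_nat_add_iff 1).mpr (Real.summable_nat_pow_inv.mpr one_lt_two)

lemma norm_Li2_term_le {x : ℝ} (hx : |x| ≤ 1) (n : ℕ) :
    ‖(x : ℂ) ^ (n + 1) / ((n : ℂ) + 1) ^ 2‖ ≤ (((n : ℝ) + 1) ^ 2)⁻¹ := by
  rw [norm_div, norm_pow, norm_pow, Complex.norm_real, Real.norm_eq_abs, div_eq_mul_inv]
  norm_cast
  exact mul_le_of_le_one_left (by positivity) (pow_le_one₀ (abs_nonneg x) hx)

lemma continuousOn_Li2 : ContinuousOn Li2 (Icc (-1) 1) :=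
  continuousOn_tsum (fun _ => (Complex.continuous_ofReal.pow _).div_const _ |>.continuousOn)
    summable_inv_succ_sq fun n _ hx => norm_Li2_term_le (abs_le.mpr hx) n

lemma hasDerivAt_Li2_of_abs_lt_one {x : ℝ} (hx : |x| < 1) :
    HasDerivAt Li2 (∑' n : ℕ, (x : ℂ) ^ n / ((n : ℂ) + 1)) x := by
  set r := (1 + |x|) / 2
  have hr : |x| < r := by simp only [r]; linarith
  have hr1 : r < 1 := by simp only [r]; linarith
  have hr0 : 0 < r := (abs_nonneg x).trans_lt hr
  refine hasDerivAt_tsum_of_isPreconnected (u := fun n : ℕ => r ^ n) (t := Ioo (-r) r) (y₀ := 0)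
    (g := fun (n : ℕ) (y : ℝ) => (y : ℂ) ^ (n + 1) / ((n : ℂ) + 1) ^ 2)
    (g' := fun (n : ℕ) (y : ℝ) => (y : ℂ) ^ n / ((n : ℂ) + 1))
    (summable_geometric_of_lt_one hr0.le hr1) isOpen_Ioo (convex_Ioo _ _).isPreconnected
    (fun n y _ => ?_) (fun n y hy => ?_) ⟨neg_lt_zero.2 hr0, hr0⟩ (by simp) (abs_lt.mp hr)
  · have hn : (n : ℂ) + 1 ≠ 0 := by exact_mod_cast n.succ_ne_zero
    refine ((hasDerivAt_pow (n + 1) (y : ℂ)).comp_ofReal.div_const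
      (((n : ℂ) + 1) ^ 2)).congr_deriv ?_
    push_cast
    field_simp
  · rw [norm_div, norm_pow, Complex.norm_real, Real.norm_eq_abs]
    norm_cast
    exact (div_le_self (by positivity) (by simp)).trans
      (pow_le_pow_left₀ (abs_nonneg y) (abs_le.mpr ⟨hy.1.le, hy.2.le⟩) n)

lemma hasSum_pow_div_succ {z : ℂ} (hz : ‖z‖ < 1) (hz0 : z ≠ 0) :
    HasSum (fun n : ℕ => z ^ n / ((n : ℂ) + 1)) (-Complex.log (1 - z) / z) := by
  simpa only [pow_succ, div_right_comm _ _ z, mul_div_cancel_right₀ _ hz0] using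
    (Complex.hasSum_taylorSeries_neg_log' hz).div_const z

lemma hasDerivAt_Li2 {x : ℝ} (hx : |x| < 1) (hx0 : x ≠ 0) :
    HasDerivAt Li2 (-Complex.log (1 - x) / x) x := by
  rw [← (hasSum_pow_div_succ (by simpa using hx) (by exact_mod_cast hx0)).tsum_eq]
  exact hasDerivAt_Li2_of_abs_lt_one hx

lemma integrableOn_div_cpow_mul_one_sub_cpow {a b : ℂ} (ha : a.re < 1) (hb : b.re < 1)
    {φ : ℝ → ℂ} {M : ℝ} (hφc : ContinuousOn φ (Ioo 0 1)) (hφM : ∀ x ∈ Ioo (0 : ℝ) 1, ‖φ x‖ ≤ M) :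
    IntegrableOn (fun x : ℝ => φ x / ((x : ℂ) ^ a * (1 - (x : ℂ)) ^ b)) (Ioo 0 1) := by
  have hbeta : IntegrableOn
      (fun x : ℝ => ((x : ℂ) ^ a)⁻¹ * ((1 - (x : ℂ)) ^ b)⁻¹) (Ioo 0 1) := by
    have := (intervalIntegrable_iff_integrableOn_Ioo_of_le zero_le_one).mp
      (Complex.betaIntegral_convergent (u := 1 - a) (v := 1 - b) (by simpa using ha)
        (by simpa using hb))
    simpa only [sub_sub_cancel_left, Complex.cpow_neg] using this
  simp only [div_eq_mul_inv, mul_inv]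
  refine (hbeta.norm.const_mul M).mono'
    ((hφc.aestronglyMeasurable measurableSet_Ioo).mul hbeta.aestronglyMeasurable) ?_
  filter_upwards [ae_restrict_mem measurableSet_Ioo] with x hx
  rw [norm_mul]
  exact mul_le_mul_of_nonneg_right (hφM x hx) (norm_nonneg _)

lemma integrableOn_Li2_div {a b : ℂ} (ha : a.re < 1) (hb : b.re < 1) :
    IntegrableOn (fun x : ℝ => Li2 x / ((x : ℂ) ^ a * (1 - (x : ℂ)) ^ b)) (Ioo 0 1) := by
  have hIoo : Ioo (0 : ℝ) 1 ⊆ Icc (-1) 1 := fun x hx => ⟨by linarith [hx.1], hx.2.le⟩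
  obtain ⟨M, hM⟩ := isCompact_Icc.exists_bound_of_continuousOn continuousOn_Li2
  exact integrableOn_div_cpow_mul_one_sub_cpow ha hb (continuousOn_Li2.mono hIoo)
    fun x hx => hM x (hIoo hx)

lemma integrableOn_neg_log_one_sub_div {a b : ℂ} (ha : a.re < 1) (hb : b.re < 1) :
    IntegrableOn (fun x : ℝ => -Complex.log (1 - x) / ((x : ℂ) ^ a * (1 - (x : ℂ)) ^ b))
      (Ioo 0 1) := by
  set t : ℝ := (1 - b.re) / 2
  have ht : 0 < t := by simp only [t]; linarith
  have hslit {x : ℝ} (hx : x ∈ Ioo (0 : ℝ) 1) : (1 : ℂ) - x ∈ Complex.slitPlane := by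
    exact_mod_cast Complex.ofReal_mem_slitPlane.2 (sub_pos.2 hx.2)
  -- `(1 - x) ^ t` tames the logarithmic singularity at `1` and is absorbed into the weight
  have hφc : ContinuousOn (fun x : ℝ => -Complex.log (1 - x) * (1 - (x : ℂ)) ^ (t : ℂ))
      (Ioo 0 1) := fun x hx =>
    have h1x : ContinuousAt (fun y : ℝ => (1 : ℂ) - y) x := by fun_prop
    ((h1x.clog (hslit hx)).neg.mul (h1x.cpow continuousAt_const (hslit hx))).continuousWithinAt
  have hφM (x : ℝ) (hx : x ∈ Ioo (0 : ℝ) 1) :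
      ‖-Complex.log (1 - x) * (1 - (x : ℂ)) ^ (t : ℂ)‖ ≤ 1 / t := by
    have h1x : (0 : ℝ) < 1 - x := sub_pos.2 hx.2
    have := Real.abs_log_mul_self_rpow_lt (1 - x) t h1x (by linarith [hx.1]) ht
    rw [norm_mul, norm_neg, ← Complex.ofReal_one, ← Complex.ofReal_sub,
      ← Complex.ofReal_log h1x.le, Complex.norm_real, Complex.norm_cpow_eq_rpow_re_of_pos h1x]
    rw [abs_mul, abs_of_pos (Real.rpow_pos_of_pos h1x t)] at this
    simpa using this.le
  have hbt : (b + t).re < 1 := by simp only [Complex.add_re, Complex.ofReal_re, t]; linarith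
  refine (integrableOn_div_cpow_mul_one_sub_cpow ha hbt hφc hφM).congr_fun (fun x hx => ?_)
    measurableSet_Ioo
  have h1x : (1 : ℂ) - x ≠ 0 := Complex.slitPlane_ne_zero (hslit hx)
  have h1xt : (1 - (x : ℂ)) ^ (t : ℂ) ≠ 0 := by simp [Complex.cpow_eq_zero_iff, h1x]
  simp only [Complex.cpow_add _ _ h1x]
  field_simp

lemma hasDerivAt_Li2_mul_cpow_mul_one_sub_cpow (a b : ℂ) {x : ℝ} (hx : x ∈ Ioo (0 : ℝ) 1) :
    HasDerivAt (fun y : ℝ => Li2 y * (y : ℂ) ^ (1 - a) * (1 - (y : ℂ)) ^ (-b))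
      (-Complex.log (1 - x) / ((x : ℂ) ^ a * (1 - (x : ℂ)) ^ b)
        + (1 - a) * (Li2 x / ((x : ℂ) ^ a * (1 - (x : ℂ)) ^ b))
        + b * (Li2 x / ((x : ℂ) ^ (a - 1) * (1 - (x : ℂ)) ^ (b + 1)))) x := by
  obtain ⟨hx0, hx1⟩ := hx
  have hx_slit : (x : ℂ) ∈ Complex.slitPlane := Complex.ofReal_mem_slitPlane.2 hx0
  have h1x_slit : 1 - (x : ℂ) ∈ Complex.slitPlane := by
    exact_mod_cast Complex.ofReal_mem_slitPlane.2 (sub_pos.2 hx1)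
  have hLi2 := hasDerivAt_Li2 (abs_lt.2 ⟨by linarith, hx1⟩) hx0.ne'
  have hpow : HasDerivAt (fun y : ℝ => (y : ℂ) ^ (1 - a)) ((1 - a) * (x : ℂ) ^ (1 - a - 1)) x :=
    (Complex.hasStrictDerivAt_cpow_const hx_slit).hasDerivAt.comp_ofReal
  have hpow' : HasDerivAt (fun y : ℝ => (1 - (y : ℂ)) ^ (-b))
      (-b * (1 - (x : ℂ)) ^ (-b - 1) * -1) x :=
    (((hasDerivAt_id (x : ℂ)).const_sub 1).cpow_const h1x_slit).comp_ofReal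
  refine ((hLi2.mul hpow).mul hpow').congr_deriv ?_
  have hX : (x : ℂ) ≠ 0 := Complex.slitPlane_ne_zero hx_slit
  have hY : 1 - (x : ℂ) ≠ 0 := Complex.slitPlane_ne_zero h1x_slit
  have hXa : (x : ℂ) ^ a ≠ 0 := by simp [Complex.cpow_eq_zero_iff, hX]
  have hYb : (1 - (x : ℂ)) ^ b ≠ 0 := by simp [Complex.cpow_eq_zero_iff, hY]
  simp only [Complex.cpow_sub _ _ hX, Complex.cpow_sub _ _ hY, Complex.cpow_add _ _ hY,
    Complex.cpow_neg, Complex.cpow_one, Pi.mul_apply]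
  field_simp

lemma continuousOn_Li2_mul_cpow_mul_one_sub_cpow {p q : ℂ} (hp : 0 < p.re) (hq : 0 < q.re) :
    ContinuousOn (fun y : ℝ => Li2 y * (y : ℂ) ^ p * (1 - (y : ℂ)) ^ q) (Icc 0 1) := by
  have hq' : Continuous fun y : ℝ => (1 - (y : ℂ)) ^ q := by
    simpa [Function.comp_def] using
      (Complex.continuous_ofReal_cpow_const hq).comp (continuous_sub_left (1 : ℝ))
  exact ((continuousOn_Li2.mono fun y hy => ⟨by linarith [hy.1], hy.2⟩).mul
    (Complex.continuous_ofReal_cpow_const hp).continuousOn).mul hq'.continuousOn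

theorem dilog_integration_by_parts (α β : ℂ) (hα : α.re < 1) (hβ : β.re < 0) :
    (∫ x in (0:ℝ)..1, -Complex.log (1 - (x : ℂ)) / ((x : ℂ) ^ α * ((1 : ℂ) - x) ^ β))
      = -(1 - α) * (∫ x in (0:ℝ)..1, Li2 x / ((x : ℂ) ^ α * ((1 : ℂ) - x) ^ β))
        - β * ∫ x in (0:ℝ)..1, Li2 x / ((x : ℂ) ^ (α - 1) * ((1 : ℂ) - x) ^ (β + 1)) := by
  have hp : 0 < (1 - α).re := by simpa using hα
  have hq : 0 < (-β).re := by simpa using hβ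
  have hα1 : (α - 1).re < 1 := by rw [Complex.sub_re, Complex.one_re]; linarith
  have hβ1 : (β + 1).re < 1 := by simpa using hβ
  have hint {f : ℝ → ℂ} (hf : IntegrableOn f (Ioo 0 1)) : IntervalIntegrable f volume 0 1 :=
    (intervalIntegrable_iff_integrableOn_Ioo_of_le zero_le_one).2 hf
  have h1 := hint (integrableOn_neg_log_one_sub_div hα (hβ.trans one_pos))
  have h2 := (hint (integrableOn_Li2_div hα (hβ.trans one_pos))).const_mul (1 - α)
  have h3 := (hint (integrableOn_Li2_div hα1 hβ1)).const_mul β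
  have hFTC := intervalIntegral.integral_eq_sub_of_hasDerivAt_of_le zero_le_one
    (continuousOn_Li2_mul_cpow_mul_one_sub_cpow hp hq)
    (fun x hx => hasDerivAt_Li2_mul_cpow_mul_one_sub_cpow α β hx) ((h1.add h2).add h3)
  have hp0 : 1 - α ≠ 0 := fun h => by simp [h] at hp
  have hq0 : -β ≠ 0 := fun h => by simp [h] at hq
  simp only [Complex.ofReal_zero, Complex.ofReal_one, sub_self, Complex.zero_cpow hp0,
    Complex.zero_cpow hq0, mul_zero, zero_mul, sub_zero] at hFTC
  rw [intervalIntegral.integral_add (h1.add h2) h3, intervalIntegral.integral_add h1 h2,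
    intervalIntegral.integral_const_mul, intervalIntegral.integral_const_mul] at hFTC
  linear_combination hFTC
end

section
/- For positive integers q ≥ 1 and p, m ≥ 2, the double zeta values satisfy the symmetric relation: Σ_{i+j=m-1, i,j≥0} C(p+i-1,i) C(q+j-1,j) ζ(p+i, q+j) − (-1)^q Σ_{i+j=p-1, i,j≥0} C(m+i-1,i) C(q+j-1,j) ζ(m+i, q+j) = Σ_{i+j=q-1, i,j≥0} (-1)^j C(m+i-1,i) C(p+j-1,j) ζ(m+i) ζ(p+j). -/
/-- Riemann zeta value `ζ(a) = Σ_{n≥1} 1/n^a`. -/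
noncomputable def rzeta (a : ℕ) : ℝ := ∑' n : ℕ, 1 / ((n : ℝ) + 1) ^ a

/-- Double zeta value `ζ(a,b) = Σ_{n_1 > n_2 ≥ 1} 1/(n_1^a n_2^b)`,
parametrized by `p : ℕ × ℕ` with `n_2 = p.2 + 1`, `n_1 = p.2 + p.1 + 2`. -/
noncomputable def dzeta (a b : ℕ) : ℝ :=
  ∑' p : ℕ × ℕ, 1 / (((p.2 : ℝ) + (p.1 : ℝ) + 2) ^ a * ((p.2 : ℝ) + 1) ^ b)

/-!
Index all three sums by pairs of positive integers `(x, c)`: `ζ(s, t)` is the sum of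
`1 / ((x + c) ^ s * x ^ t)`, or equally of `1 / ((x + c) ^ s * c ^ t)`, and `ζ(s) ζ(t)` is the sum
of `1 / (x ^ s * c ^ t)`. With `m = a + 1`, `p = b + 1`, `q = g + 1`, the three terms of the
relation at `(x, c)` are then, up to sign, the residues of
`1 / ((t - (x + c)) ^ m * t ^ p * (t - c) ^ q)` at its three poles, and these add up to zero
because the function is `O(t⁻³)` at infinity.

The residue identity is proved algebraically: the partial fraction
`1 / ((t - β) (t - γ)) = (1 / (t - β) - 1 / (t - γ)) / (β - γ)` gives a recurrence lowering two
exponents at once, which leaves the case of a single multiple pole, a geometric sum.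
-/

open Finset

section PartialFractions

variable {K : Type*} [Field K]

/-- The coefficient of `s ^ n` in `(u - s) ^ (-(b + 1)) * (v - s) ^ (-(g + 1))`. -/
def pfCoeff (u v : K) (b g n : ℕ) : K :=
  ∑ ij ∈ antidiagonal n,
    ((b + ij.1).choose ij.1 * (g + ij.2).choose ij.2 : K) /
      (u ^ (b + 1 + ij.1) * v ^ (g + 1 + ij.2))

theorem pfCoeff_comm (u v : K) (b g n : ℕ) : pfCoeff u v b g n = pfCoeff v u g b n := by
  rw [pfCoeff, ← Nat.sum_antidiagonal_swap]
  exact sum_congr rfl fun ij _ => by simp only [Prod.fst_swap, Prod.snd_swap]; ring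

theorem pfCoeff_zero (u v : K) (b g : ℕ) :
    pfCoeff u v b g 0 = 1 / (u ^ (b + 1) * v ^ (g + 1)) := by
  simp [pfCoeff]

theorem pfCoeff_neg (u v : K) (b g n : ℕ) :
    pfCoeff (-u) (-v) b g n = (-1) ^ (b + g + n) * pfCoeff u v b g n := by
  rw [pfCoeff, pfCoeff, mul_sum]
  refine sum_congr rfl fun ij hij => ?_
  obtain rfl := mem_antidiagonal.mp hij
  simp only [neg_pow u, neg_pow v, div_eq_mul_inv, mul_inv, ← inv_pow, inv_neg_one]
  ring

theorem mul_pfCoeff_succ_succ (u : K) {v : K} (hv : v ≠ 0) (b g n : ℕ) :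
    v * pfCoeff u v b (g + 1) (n + 1) = pfCoeff u v b g (n + 1) + pfCoeff u v b (g + 1) n := by
  simp only [pfCoeff]
  rw [Nat.sum_antidiagonal_succ', Nat.sum_antidiagonal_succ', mul_add, mul_sum]
  conv_rhs => rw [add_assoc, ← sum_add_distrib]
  congr 1
  · simp only [Nat.choose_zero_right, add_zero]
    field_simp
    ring
  · refine sum_congr rfl fun ij _ => ?_
    have pascal : ((g + 1 + (ij.2 + 1)).choose (ij.2 + 1) : K) =
        (g + (ij.2 + 1)).choose (ij.2 + 1) + (g + 1 + ij.2).choose ij.2 := by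
      rw [show g + 1 + (ij.2 + 1) = g + 1 + ij.2 + 1 by ring, Nat.choose_succ_succ',
        show g + (ij.2 + 1) = g + 1 + ij.2 by ring]
      push_cast
      ring
    rw [pascal]
    field_simp
    ring

theorem sub_mul_pfCoeff_succ_succ {u v : K} (hu : u ≠ 0) (hv : v ≠ 0) (b g n : ℕ) :
    (v - u) * pfCoeff u v (b + 1) (g + 1) n =
      pfCoeff u v (b + 1) g n - pfCoeff u v b (g + 1) n := by
  cases n with
  | zero =>
    simp only [pfCoeff_zero]
    field_simp
    ring
  | succ n =>
    have hv' := mul_pfCoeff_succ_succ u hv (b + 1) g n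
    have hu' := mul_pfCoeff_succ_succ v hu (g + 1) b n
    rw [pfCoeff_comm v, pfCoeff_comm v, pfCoeff_comm v] at hu'
    linear_combination hv' - hu'

theorem sub_mul_pfCoeff_zero_zero {u v : K} (hu : u ≠ 0) (hv : v ≠ 0) (n : ℕ) :
    (v - u) * pfCoeff u v 0 0 n = 1 / u ^ (n + 1) - 1 / v ^ (n + 1) := by
  induction n with
  | zero =>
    rw [pfCoeff_zero]
    field_simp
    ring
  | succ n ih =>
    have h : pfCoeff u v 0 0 (n + 1) = 1 / (u ^ (n + 2) * v) + pfCoeff u v 0 0 n / v := by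
      simp only [pfCoeff]
      rw [Nat.sum_antidiagonal_succ', sum_div]
      congr 1
      · simp only [zero_add, add_zero, Nat.choose_self, Nat.cast_one, mul_one, pow_one]
        ring
      · refine sum_congr rfl fun ij _ => ?_
        simp only [zero_add, Nat.choose_self, Nat.cast_one]
        field_simp
        ring
    have hrec :
        (v - u) * (pfCoeff u v 0 0 n / v) = (1 / u ^ (n + 1) - 1 / v ^ (n + 1)) / v := by
      rw [← ih]
      ring
    rw [h, mul_add, hrec]
    field_simp
    ring

/-- The sum of the residues of `1 / ((t - α) ^ (a + 1) * (t - β) ^ (b + 1) * (t - γ) ^ (g + 1))`: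
the residue at `α` is the coefficient of `s ^ a` in
`(α - β + s) ^ (-(b + 1)) * (α - γ + s) ^ (-(g + 1))`. -/
def residueSum (α β γ : K) (a b g : ℕ) : K :=
  (-1) ^ a * pfCoeff (α - β) (α - γ) b g a + (-1) ^ b * pfCoeff (β - α) (β - γ) a g b +
    (-1) ^ g * pfCoeff (γ - α) (γ - β) a b g

theorem residueSum_rotate (α β γ : K) (a b g : ℕ) :
    residueSum β γ α b g a = residueSum α β γ a b g := by
  simp only [residueSum, pfCoeff_comm (β - γ), pfCoeff_comm (γ - β)]
  ring

theorem sub_mul_residueSum_succ_succ {α β γ : K} (hαβ : α ≠ β) (hαγ : α ≠ γ) (hβγ : β ≠ γ)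
    (a b g : ℕ) :
    (β - γ) * residueSum α β γ a (b + 1) (g + 1) =
      residueSum α β γ a (b + 1) g - residueSum α β γ a b (g + 1) := by
  have hα := sub_mul_pfCoeff_succ_succ (sub_ne_zero.2 hαβ) (sub_ne_zero.2 hαγ) b g a
  have hβ := mul_pfCoeff_succ_succ (β - α) (sub_ne_zero.2 hβγ) a g b
  have hγ := mul_pfCoeff_succ_succ (γ - α) (sub_ne_zero.2 hβγ.symm) a b g
  simp only [residueSum]
  linear_combination (-1) ^ a * hα + (-1) ^ (b + 1) * hβ + (-1) ^ g * hγ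

theorem residueSum_zero_zero {α β γ : K} (hαβ : α ≠ β) (hαγ : α ≠ γ) (hβγ : β ≠ γ) (n : ℕ) :
    residueSum α β γ n 0 0 = 0 := by
  have h := sub_mul_pfCoeff_zero_zero (sub_ne_zero.2 hαβ) (sub_ne_zero.2 hαγ) n
  have hw := mul_inv_cancel₀ (sub_ne_zero.2 hβγ)
  rw [show α - γ - (α - β) = β - γ by ring] at h
  refine (mul_eq_zero.1 ?_).resolve_left (sub_ne_zero.2 hβγ)
  simp only [residueSum, pfCoeff_zero, pow_zero, one_mul, zero_add, pow_one]
  rw [show β - α = -(α - β) by ring, show γ - α = -(α - γ) by ring, show γ - β = -(β - γ) by ring]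
  generalize α - β = u at *
  generalize α - γ = v at *
  generalize β - γ = w at *
  simp only [neg_pow u, neg_pow v, inv_neg, div_eq_mul_inv, mul_inv, ← inv_pow]
  linear_combination (-1) ^ n * h - (-1) ^ n * (1 / u ^ (n + 1) - 1 / v ^ (n + 1)) * hw

theorem residueSum_eq_zero {α β γ : K} (hαβ : α ≠ β) (hαγ : α ≠ γ) (hβγ : β ≠ γ) (a b g : ℕ) :
    residueSum α β γ a b g = 0 := by
  obtain ⟨n, hn⟩ : ∃ n, a + b + g = n := ⟨_, rfl⟩
  induction n using Nat.strong_induction_on generalizing α β γ a b g with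
  | _ n ih =>
    have reduce : ∀ {α β γ : K} {a b g : ℕ}, α ≠ β → α ≠ γ → β ≠ γ → a + (b + 1) + (g + 1) = n →
        residueSum α β γ a (b + 1) (g + 1) = 0 := by
      intro α β γ a b g hαβ hαγ hβγ hn
      have h := sub_mul_residueSum_succ_succ hαβ hαγ hβγ a b g
      rw [ih (a + (b + 1) + g) (by omega) hαβ hαγ hβγ a (b + 1) g rfl,
        ih (a + b + (g + 1)) (by omega) hαβ hαγ hβγ a b (g + 1) rfl, sub_zero] at h
      exact (mul_eq_zero.1 h).resolve_left (sub_ne_zero.2 hβγ)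
    rcases a with _ | a <;> rcases b with _ | b <;> rcases g with _ | g
    · exact residueSum_zero_zero hαβ hαγ hβγ 0
    · rw [← residueSum_rotate, ← residueSum_rotate]
      exact residueSum_zero_zero hαγ.symm hβγ.symm hαβ _
    · rw [← residueSum_rotate]
      exact residueSum_zero_zero hβγ hαβ.symm hαγ.symm _
    · exact reduce hαβ hαγ hβγ hn
    · exact residueSum_zero_zero hαβ hαγ hβγ _
    · rw [← residueSum_rotate]
      exact reduce hβγ hαβ.symm hαγ.symm (by omega)
    · rw [← residueSum_rotate, ← residueSum_rotate]
      exact reduce hαγ.symm hβγ.symm hαβ (by omega)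
    · exact reduce hαβ hαγ hβγ hn

theorem neg_one_pow_mul_pfCoeff_add_add {x c : K} (hx : x ≠ 0) (hc : c ≠ 0)
    (hxc : x + c ≠ 0) (a b g : ℕ) :
    (-1) ^ (b + 1) * (pfCoeff (x + c) x b g a + (-1) ^ g * pfCoeff (c + x) c a g b) =
      pfCoeff x (-c) a b g := by
  have h :=
    residueSum_eq_zero (α := x + c) (β := 0) (γ := c) hxc (by simpa using hx) hc.symm a b g
  have hγ := pfCoeff_neg x (-c) a b g
  rw [neg_neg] at hγ
  rw [residueSum, sub_zero, add_sub_cancel_right, show 0 - (x + c) = -(c + x) by ring, zero_sub,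
    show c - (x + c) = -x by ring, sub_zero, pfCoeff_neg, hγ] at h
  have sq : ∀ k : ℕ, (-1 : K) ^ k * (-1) ^ k = 1 := fun k => by
    rw [← pow_add, (Even.add_self k).neg_one_pow]
  have key : (-1 : K) ^ a * (pfCoeff (x + c) x b g a + (-1) ^ g * pfCoeff (c + x) c a g b +
      (-1) ^ b * pfCoeff x (-c) a b g) = 0 := by
    linear_combination h - (-1) ^ a * (-1) ^ g * pfCoeff (c + x) c a g b * sq b -
      (-1) ^ a * (-1) ^ b * pfCoeff x (-c) a b g * sq g
  linear_combination -(-1) ^ b * neg_one_pow_mul_eq_zero_iff.1 key + pfCoeff x (-c) a b g * sq b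

end PartialFractions

theorem mul_rpow_three_halves_le {x c : ℝ} (hx : 1 ≤ x) (hc : 1 ≤ c) {a b : ℕ} (ha : 2 ≤ a)
    (hb : 1 ≤ b) : (x * c) ^ (3 / 2 : ℝ) ≤ (x + c) ^ a * x ^ b := by
  have hsq : (x * c) ^ 3 ≤ ((x + c) ^ 2 * x) ^ 2 := by
    have : c ^ 3 * x ≤ (x + c) ^ 3 * (x + c) := by gcongr <;> linarith
    nlinarith [pow_pos (by linarith : (0 : ℝ) < x) 2]
  calc (x * c) ^ (3 / 2 : ℝ) ≤ (x + c) ^ 2 * x := by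
        rw [← pow_le_pow_iff_left₀ (by positivity) (by positivity) two_ne_zero,
          ← Real.rpow_mul_natCast (by positivity)]
        norm_num [hsq]
    _ ≤ (x + c) ^ a * x ^ b :=
        mul_le_mul (pow_le_pow_right₀ (by linarith) ha) (by simpa using pow_le_pow_right₀ hx hb)
          (by positivity) (by positivity)

theorem summable_one_div_nat_add_one_pow {a : ℕ} (ha : 2 ≤ a) :
    Summable fun n : ℕ => 1 / ((n : ℝ) + 1) ^ a := by
  exact_mod_cast (summable_nat_add_iff 1).2 (Real.summable_one_div_nat_pow.2 ha)

theorem summable_dzeta_summand {a b : ℕ} (ha : 2 ≤ a) (hb : 1 ≤ b) :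
    Summable fun v : ℕ × ℕ =>
      1 / ((((v.1 : ℝ) + 1) + ((v.2 : ℝ) + 1)) ^ a * ((v.1 : ℝ) + 1) ^ b) := by
  have h32 : Summable fun n : ℕ => 1 / ((n : ℝ) + 1) ^ (3 / 2 : ℝ) := by
    exact_mod_cast (summable_nat_add_iff 1).2 (Real.summable_one_div_nat_rpow.2 (by norm_num))
  refine Summable.of_nonneg_of_le (fun v => by positivity) (fun v => ?_)
    (h32.mul_of_nonneg h32 (fun _ => by positivity) (fun _ => by positivity))
  rw [one_div_mul_one_div, ← Real.mul_rpow (by positivity) (by positivity)]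
  exact one_div_le_one_div_of_le (by positivity)
    (mul_rpow_three_halves_le (by simp) (by simp) ha hb)

theorem hasSum_dzeta {a b : ℕ} (ha : 2 ≤ a) (hb : 1 ≤ b) :
    HasSum
      (fun v : ℕ × ℕ => 1 / ((((v.1 : ℝ) + 1) + ((v.2 : ℝ) + 1)) ^ a * ((v.1 : ℝ) + 1) ^ b))
      (dzeta a b) := by
  convert (summable_dzeta_summand ha hb).hasSum using 1
  rw [dzeta, ← (Equiv.prodComm ℕ ℕ).tsum_eq]
  exact tsum_congr fun v => by
    simp only [Equiv.prodComm_apply, Prod.fst_swap, Prod.snd_swap]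
    ring_nf

theorem hasSum_rzeta_mul_rzeta {a b : ℕ} (ha : 2 ≤ a) (hb : 2 ≤ b) :
    HasSum (fun v : ℕ × ℕ => 1 / (((v.1 : ℝ) + 1) ^ a * ((v.2 : ℝ) + 1) ^ b))
      (rzeta a * rzeta b) := by
  have hsa := summable_one_div_nat_add_one_pow ha
  have hsb := summable_one_div_nat_add_one_pow hb
  have h := hsa.hasSum.mul hsb.hasSum
    (hsa.mul_of_nonneg hsb (fun _ => by positivity) (fun _ => by positivity))
  simp only [one_div_mul_one_div] at h
  exact h

theorem hasSum_pfCoeff_dzeta {b : ℕ} (hb : 1 ≤ b) (a g : ℕ) :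
    HasSum (fun v : ℕ × ℕ => pfCoeff (((v.1 : ℝ) + 1) + ((v.2 : ℝ) + 1)) ((v.1 : ℝ) + 1) b g a)
      (∑ i ∈ range (a + 1), ((b + i).choose i : ℝ) * (g + (a - i)).choose (a - i) *
        dzeta (b + 1 + i) (g + 1 + (a - i))) := by
  simp only [pfCoeff, Nat.sum_antidiagonal_eq_sum_range_succ_mk]
  refine hasSum_sum fun i _ => ?_
  simpa only [mul_one_div] using (hasSum_dzeta (by omega) (by omega)).mul_left _

theorem hasSum_pfCoeff_rzeta_mul_rzeta {a b : ℕ} (ha : 1 ≤ a) (hb : 1 ≤ b) (g : ℕ) :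
    HasSum (fun v : ℕ × ℕ => pfCoeff ((v.1 : ℝ) + 1) (-((v.2 : ℝ) + 1)) a b g)
      ((-1) ^ (b + 1) * ∑ i ∈ range (g + 1), (-1) ^ (g - i) * ((a + i).choose i : ℝ) *
        (b + (g - i)).choose (g - i) * rzeta (a + 1 + i) * rzeta (b + 1 + (g - i))) := by
  simp only [pfCoeff, Nat.sum_antidiagonal_eq_sum_range_succ_mk, mul_sum]
  refine hasSum_sum fun i _ => ?_
  have h := (hasSum_rzeta_mul_rzeta (a := a + 1 + i) (b := b + 1 + (g - i)) (by omega)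
    (by omega)).mul_left ((-1) ^ (b + 1) * (-1) ^ (g - i) * ((a + i).choose i : ℝ) *
      (b + (g - i)).choose (g - i))
  simp only [mul_assoc] at h ⊢
  refine h.congr_fun fun v => ?_
  generalize (v.1 : ℝ) + 1 = x
  generalize (v.2 : ℝ) + 1 = c
  simp only [neg_pow c, div_eq_mul_inv, mul_inv, ← inv_pow]
  ring

theorem double_zeta_symmetric (p q m : ℕ) (hq : 1 ≤ q) (hp : 2 ≤ p) (hm : 2 ≤ m) :
    (∑ i ∈ Finset.range m, (Nat.choose (p + i - 1) i : ℝ) *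
        (Nat.choose (q + (m - 1 - i) - 1) (m - 1 - i) : ℝ) * dzeta (p + i) (q + (m - 1 - i)))
      - (-1 : ℝ) ^ q * ∑ i ∈ Finset.range p, (Nat.choose (m + i - 1) i : ℝ) *
        (Nat.choose (q + (p - 1 - i) - 1) (p - 1 - i) : ℝ) * dzeta (m + i) (q + (p - 1 - i))
    = ∑ i ∈ Finset.range q, (-1 : ℝ) ^ (q - 1 - i) * (Nat.choose (m + i - 1) i : ℝ) *
        (Nat.choose (p + (q - 1 - i) - 1) (q - 1 - i) : ℝ) *
        rzeta (m + i) * rzeta (p + (q - 1 - i)) := by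
  obtain ⟨a, rfl⟩ : ∃ a, m = a + 1 := ⟨m - 1, by omega⟩
  obtain ⟨b, rfl⟩ : ∃ b, p = b + 1 := ⟨p - 1, by omega⟩
  obtain ⟨g, rfl⟩ : ∃ g, q = g + 1 := ⟨q - 1, by omega⟩
  have hsub : ∀ k l : ℕ, k + 1 + l - 1 = k + l := fun _ _ => by omega
  simp only [hsub, add_tsub_cancel_right]
  have h₁ := hasSum_pfCoeff_dzeta (b := b) (by omega) a g
  have h₂ := (Equiv.prodComm ℕ ℕ).hasSum_iff.2 (hasSum_pfCoeff_dzeta (b := a) (by omega) b g)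
  have h₃ := hasSum_pfCoeff_rzeta_mul_rzeta (a := a) (b := b) (by omega) (by omega) g
  have h := ((h₁.add (h₂.mul_left ((-1) ^ g))).mul_left ((-1) ^ (b + 1))).congr_fun fun v =>
    (neg_one_pow_mul_pfCoeff_add_add (by positivity) (by positivity) (by positivity) a b g).symm
  have := mul_left_cancel₀ (pow_ne_zero _ (neg_ne_zero.2 one_ne_zero)) (h.unique h₃)
  linear_combination this
end
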